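/- Let 1 < p < ∞ and K ∈ (0,1), and define F(y) = K^{p−1}·((cot_p(Ky))^{p−1} + |cot_p(K(π_p−y))|^{p−2}·cot_p(K(π_p−y))) for y ∈ (0,π_p/2]. Then F(y) > F(π_p/2) = 2·K^{p−1}·(cot_p(K·π_p/2))^{p−1} for every y ∈ (0,π_p/2); in particular the minimum of F on (0,π_p/2] is attained exactly at y = π_p/2. -/

import Mathlib

/-!
Write `G = |cot_p|^(p-2) cot_p`, so that `F(y) = K^(p-1) (G(K y) + G(K(π_p - y)))` on
`(0, π_p/2]`. Since `sin_p' = cos_p`, away from `π_p/2` one has `G' = -(p-1) / sin_p^p`, and `G`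
is continuous at `π_p/2`, where it vanishes. The derivative of `y ↦ G(K y) + G(K(π_p - y))` is
therefore `K(p-1) (sin_p(K(π_p - y))^(-p) - sin_p(K y)^(-p))`, which is negative: `K y < K(π_p - y)`
and their sum `K π_p` is less than `π_p`, so `sin_p(K y) < sin_p(K(π_p - y))`. Hence this function
is strictly decreasing on `(0, π_p/2]`.
-/

/-- `arcsin_p x = ∫₀ˣ (1 - tᵖ)^(-1/p) dt`. -/
noncomputable def arcsinP (p x : ℝ) : ℝ := ∫ t in (0:ℝ)..x, (1 - t ^ p) ^ (-(1 / p))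

/-- The generalized π: `π_p = 2 arcsin_p 1`. -/
noncomputable def piP (p : ℝ) : ℝ := 2 * arcsinP p 1

/-- `sin_p` on `[0, π_p/2]`, defined as the inverse of `arcsin_p : [0,1] → [0, π_p/2]`. -/
noncomputable def sinPHalf (p : ℝ) : ℝ → ℝ := Function.invFunOn (arcsinP p) (Set.Icc 0 1)

/-- `sin_p` on `[0, π_p]`, extended by `sin_p x = sin_p (π_p - x)`. -/
noncomputable def sinP (p x : ℝ) : ℝ :=
  if x ≤ piP p / 2 then sinPHalf p x else sinPHalf p (piP p - x)

/-- `cos_p x = (1 - sin_p x ^ p)^(1/p)` on `[0, π_p/2]`, with minus sign on `[π_p/2, π_p]`. -/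
noncomputable def cosP (p x : ℝ) : ℝ :=
  if x ≤ piP p / 2 then (1 - sinP p x ^ p) ^ (1 / p)
  else -((1 - sinP p x ^ p) ^ (1 / p))

/-- `cot_p x = cos_p x / sin_p x`. -/
noncomputable def cotP (p x : ℝ) : ℝ := cosP p x / sinP p x

open Set Filter MeasureTheory Topology

section ArcsinP

variable {p : ℝ}

lemma one_sub_rpow_pos (hp : 0 < p) {t : ℝ} (h0 : 0 ≤ t) (h1 : t < 1) : 0 < 1 - t ^ p :=
  sub_pos.mpr (Real.rpow_lt_one h0 h1 hp)

lemma continuousOn_arcsinP_integrand (hp : 0 < p) :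
    ContinuousOn (fun t : ℝ => (1 - t ^ p) ^ (-(1 / p))) (Ico 0 1) := fun _ ht =>
  ((continuous_const.sub (Real.continuous_rpow_const hp.le)).continuousAt.rpow_const
    (Or.inl (one_sub_rpow_pos hp ht.1 ht.2).ne')).continuousWithinAt

/-- The singularity at `t = 1` is dominated by `(1 - t) ^ (-1/p)`, integrable as `1/p < 1`. -/
lemma intervalIntegrable_arcsinP_integrand (hp : 1 < p) :
    IntervalIntegrable (fun t : ℝ => (1 - t ^ p) ^ (-(1 / p))) volume 0 1 := by
  have hp0 : 0 < p := by linarith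
  have hdom : IntervalIntegrable (fun t : ℝ => (1 - t) ^ (-(1 / p))) volume 0 1 := by
    have hexp : -1 < -(1 / p) := by
      have : 1 / p < 1 := (div_lt_one hp0).mpr hp
      linarith
    simpa using
      ((intervalIntegral.intervalIntegrable_rpow' (a := 0) (b := 1) hexp).comp_sub_left 1).symm
  have hmeas : AEStronglyMeasurable (fun t : ℝ => (1 - t ^ p) ^ (-(1 / p)))
      (volume.restrict (uIoc 0 1)) := by
    rw [uIoc_of_le zero_le_one, ← Measure.restrict_congr_set Ioo_ae_eq_Ioc]
    exact ((continuousOn_arcsinP_integrand hp0).mono Ioo_subset_Ico_self).aestronglyMeasurable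
      measurableSet_Ioo
  refine hdom.mono_fun hmeas ?_
  rw [uIoc_of_le zero_le_one, EventuallyLE, ae_restrict_iff' measurableSet_Ioc]
  refine ae_of_all _ fun t ht => ?_
  rcases ht.2.eq_or_lt with rfl | ht1
  · simp [hp0.ne']
  · have hle : 1 - t ≤ 1 - t ^ p := by
      linarith [Real.rpow_le_self_of_le_one ht.1.le ht1.le hp.le]
    rw [Real.norm_of_nonneg (Real.rpow_nonneg (by linarith) _),
      Real.norm_of_nonneg (Real.rpow_nonneg (by linarith) _)]
    exact Real.rpow_le_rpow_of_nonpos (by linarith) hle (by simp [hp0.le])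

lemma intervalIntegrable_arcsinP_integrand_of_mem (hp : 1 < p) {a b : ℝ}
    (ha : a ∈ Icc (0 : ℝ) 1) (hb : b ∈ Icc (0 : ℝ) 1) :
    IntervalIntegrable (fun t : ℝ => (1 - t ^ p) ^ (-(1 / p))) volume a b :=
  (intervalIntegrable_arcsinP_integrand hp).mono_set <| by
    rw [uIcc_of_le zero_le_one]; exact uIcc_subset_Icc ha hb

lemma arcsinP_zero : arcsinP p 0 = 0 := intervalIntegral.integral_same

lemma arcsinP_one : arcsinP p 1 = piP p / 2 := by unfold piP; ring

lemma arcsinP_strictMonoOn (hp : 1 < p) : StrictMonoOn (arcsinP p) (Icc 0 1) := by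
  intro x hx y hy hxy
  have hxy_int := intervalIntegrable_arcsinP_integrand_of_mem hp hx hy
  have hsplit : arcsinP p x + ∫ t in x..y, (1 - t ^ p) ^ (-(1 / p)) = arcsinP p y :=
    intervalIntegral.integral_add_adjacent_intervals
      (intervalIntegrable_arcsinP_integrand_of_mem hp (left_mem_Icc.mpr zero_le_one) hx) hxy_int
  have hpos : 0 < ∫ t in x..y, (1 - t ^ p) ^ (-(1 / p)) :=
    intervalIntegral.intervalIntegral_pos_of_pos_on hxy_int (fun t ht =>
      Real.rpow_pos_of_pos (one_sub_rpow_pos (by linarith) (hx.1.trans ht.1.le)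
        (ht.2.trans_le hy.2)) _) hxy
  linarith

lemma piP_pos (hp : 1 < p) : 0 < piP p := by
  have := arcsinP_strictMonoOn hp (left_mem_Icc.mpr zero_le_one)
    (right_mem_Icc.mpr zero_le_one) one_pos
  rw [arcsinP_zero, arcsinP_one] at this
  linarith

lemma arcsinP_continuousOn (hp : 1 < p) : ContinuousOn (arcsinP p) (Icc 0 1) := by
  have h : IntegrableOn (fun t : ℝ => (1 - t ^ p) ^ (-(1 / p))) (uIcc 0 1) volume := by
    rw [uIcc_of_le zero_le_one, integrableOn_Icc_iff_integrableOn_Ioc, ← uIoc_of_le zero_le_one]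
    exact (intervalIntegrable_arcsinP_integrand hp).def'
  have := intervalIntegral.continuousOn_primitive_interval h
  rwa [uIcc_of_le zero_le_one] at this

lemma hasDerivAt_arcsinP (hp : 1 < p) {t : ℝ} (ht : t ∈ Ioo (0 : ℝ) 1) :
    HasDerivAt (arcsinP p) ((1 - t ^ p) ^ (-(1 / p))) t := by
  have hcont : ContinuousOn (fun t : ℝ => (1 - t ^ p) ^ (-(1 / p))) (Ioo 0 1) :=
    (continuousOn_arcsinP_integrand (by linarith)).mono Ioo_subset_Ico_self
  exact intervalIntegral.integral_hasDerivAt_right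
    (intervalIntegrable_arcsinP_integrand_of_mem hp (left_mem_Icc.mpr zero_le_one)
      (Ioo_subset_Icc_self ht))
    (hcont.stronglyMeasurableAtFilter isOpen_Ioo t ht) (hcont.continuousAt (Ioo_mem_nhds ht.1 ht.2))

lemma arcsinP_mapsTo (hp : 1 < p) : MapsTo (arcsinP p) (Icc 0 1) (Icc 0 (piP p / 2)) := by
  intro t ht
  have hm := (arcsinP_strictMonoOn hp).monotoneOn
  rw [← arcsinP_zero (p := p), ← arcsinP_one]
  exact ⟨hm (left_mem_Icc.mpr zero_le_one) ht ht.1, hm ht (right_mem_Icc.mpr zero_le_one) ht.2⟩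

lemma arcsinP_surjOn (hp : 1 < p) : SurjOn (arcsinP p) (Icc 0 1) (Icc 0 (piP p / 2)) := by
  have := intermediate_value_Icc zero_le_one (arcsinP_continuousOn hp)
  rwa [arcsinP_zero, arcsinP_one] at this

end ArcsinP

section SinP

variable {p : ℝ}

lemma sinPHalf_mapsTo (hp : 1 < p) : MapsTo (sinPHalf p) (Icc 0 (piP p / 2)) (Icc 0 1) :=
  (arcsinP_surjOn hp).mapsTo_invFunOn

lemma arcsinP_sinPHalf (hp : 1 < p) {x : ℝ} (hx : x ∈ Icc 0 (piP p / 2)) :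
    arcsinP p (sinPHalf p x) = x :=
  (arcsinP_surjOn hp).rightInvOn_invFunOn hx

lemma sinPHalf_arcsinP (hp : 1 < p) {t : ℝ} (ht : t ∈ Icc (0 : ℝ) 1) :
    sinPHalf p (arcsinP p t) = t :=
  (arcsinP_strictMonoOn hp).injOn.leftInvOn_invFunOn ht

lemma sinPHalf_surjOn (hp : 1 < p) : SurjOn (sinPHalf p) (Icc 0 (piP p / 2)) (Icc 0 1) :=
  fun t ht => ⟨arcsinP p t, arcsinP_mapsTo hp ht, sinPHalf_arcsinP hp ht⟩

lemma sinPHalf_strictMonoOn (hp : 1 < p) : StrictMonoOn (sinPHalf p) (Icc 0 (piP p / 2)) := by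
  intro x hx y hy hxy
  by_contra! h
  have := (arcsinP_strictMonoOn hp).monotoneOn (sinPHalf_mapsTo hp hy) (sinPHalf_mapsTo hp hx) h
  rw [arcsinP_sinPHalf hp hx, arcsinP_sinPHalf hp hy] at this
  linarith

lemma sinPHalf_half (hp : 1 < p) : sinPHalf p (piP p / 2) = 1 := by
  rw [← arcsinP_one, sinPHalf_arcsinP hp (right_mem_Icc.mpr zero_le_one)]

lemma sinPHalf_mem_Ioo (hp : 1 < p) {x : ℝ} (hx : x ∈ Ioo 0 (piP p / 2)) :
    sinPHalf p x ∈ Ioo 0 1 := by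
  have hs := sinPHalf_mapsTo hp (Ioo_subset_Icc_self hx)
  have harc := arcsinP_sinPHalf hp (Ioo_subset_Icc_self hx)
  refine ⟨hs.1.lt_of_ne ?_, hs.2.lt_of_ne ?_⟩ <;> intro heq
  · rw [← heq, arcsinP_zero] at harc; linarith [hx.1]
  · rw [heq, arcsinP_one] at harc; linarith [hx.2]

lemma continuousAt_sinPHalf (hp : 1 < p) {x : ℝ} (hx : x ∈ Ioo 0 (piP p / 2)) :
    ContinuousAt (sinPHalf p) x := by
  have hs := sinPHalf_mem_Ioo hp hx
  exact (sinPHalf_strictMonoOn hp).continuousAt_of_image_mem_nhds (Icc_mem_nhds hx.1 hx.2)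
    (mem_of_superset (Icc_mem_nhds hs.1 hs.2) (sinPHalf_surjOn hp))

lemma continuousWithinAt_sinPHalf_half (hp : 1 < p) :
    ContinuousWithinAt (sinPHalf p) (Iic (piP p / 2)) (piP p / 2) := by
  have hπ := piP_pos hp
  refine (sinPHalf_strictMonoOn hp).continuousWithinAt_left_of_image_mem_nhdsWithin
    (Icc_mem_nhdsLE_of_mem ⟨by linarith, le_rfl⟩) ?_
  rw [sinPHalf_half hp]
  exact mem_of_superset (Icc_mem_nhdsLE_of_mem ⟨zero_lt_one, le_rfl⟩) (sinPHalf_surjOn hp)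

lemma hasDerivAt_sinPHalf (hp : 1 < p) {x : ℝ} (hx : x ∈ Ioo 0 (piP p / 2)) :
    HasDerivAt (sinPHalf p) ((1 - sinPHalf p x ^ p) ^ (1 / p)) x := by
  have hs := sinPHalf_mem_Ioo hp hx
  have hbase := one_sub_rpow_pos (by linarith) hs.1.le hs.2
  have hinv : ∀ᶠ y in 𝓝 x, arcsinP p (sinPHalf p y) = y := by
    filter_upwards [Ioo_mem_nhds hx.1 hx.2] with y hy
    exact arcsinP_sinPHalf hp (Ioo_subset_Icc_self hy)
  have h := (hasDerivAt_arcsinP hp hs).of_local_left_inverse (continuousAt_sinPHalf hp hx)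
    (Real.rpow_pos_of_pos hbase _).ne' hinv
  rwa [Real.rpow_neg hbase.le, inv_inv] at h

lemma sinP_of_le {x : ℝ} (h : x ≤ piP p / 2) : sinP p x = sinPHalf p x := if_pos h

lemma sinP_of_half_lt {x : ℝ} (h : piP p / 2 < x) : sinP p x = sinPHalf p (piP p - x) :=
  if_neg h.not_ge

lemma sinP_eq_sinPHalf_min (x : ℝ) : sinP p x = sinPHalf p (min x (piP p - x)) := by
  rcases le_or_gt x (piP p / 2) with h | h
  · rw [sinP_of_le h, min_eq_left (by linarith)]
  · rw [sinP_of_half_lt h, min_eq_right (by linarith)]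

lemma sinP_half (hp : 1 < p) : sinP p (piP p / 2) = 1 := by
  rw [sinP_of_le le_rfl, sinPHalf_half hp]

lemma sinP_mem_Ioo_of_lt_half (hp : 1 < p) {x : ℝ} (hx : x ∈ Ioo 0 (piP p / 2)) :
    sinP p x ∈ Ioo 0 1 := by
  rw [sinP_of_le hx.2.le]; exact sinPHalf_mem_Ioo hp hx

lemma sinP_mem_Ioo_of_half_lt (hp : 1 < p) {x : ℝ} (hx : x ∈ Ioo (piP p / 2) (piP p)) :
    sinP p x ∈ Ioo 0 1 := by
  rw [sinP_of_half_lt hx.1]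
  exact sinPHalf_mem_Ioo hp ⟨by linarith [hx.2], by linarith [hx.1]⟩

lemma hasDerivAt_sinP_of_lt_half (hp : 1 < p) {x : ℝ} (hx : x ∈ Ioo 0 (piP p / 2)) :
    HasDerivAt (sinP p) ((1 - sinP p x ^ p) ^ (1 / p)) x := by
  have heq : sinP p =ᶠ[𝓝 x] sinPHalf p := by
    filter_upwards [Iio_mem_nhds hx.2] with y hy
    exact sinP_of_le hy.le
  rw [sinP_of_le hx.2.le]
  exact (hasDerivAt_sinPHalf hp hx).congr_of_eventuallyEq heq

lemma hasDerivAt_sinP_of_half_lt (hp : 1 < p) {x : ℝ} (hx : x ∈ Ioo (piP p / 2) (piP p)) :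
    HasDerivAt (sinP p) (-(1 - sinP p x ^ p) ^ (1 / p)) x := by
  have hx' : piP p - x ∈ Ioo 0 (piP p / 2) := ⟨by linarith [hx.2], by linarith [hx.1]⟩
  have heq : sinP p =ᶠ[𝓝 x] fun y => sinPHalf p (piP p - y) := by
    filter_upwards [Ioi_mem_nhds hx.1] with y hy
    exact sinP_of_half_lt hy
  rw [sinP_of_half_lt hx.1]
  simpa using ((hasDerivAt_sinPHalf hp hx').comp_const_sub (piP p) x).congr_of_eventuallyEq heq

lemma continuousAt_sinP_half (hp : 1 < p) : ContinuousAt (sinP p) (piP p / 2) := by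
  have hfold : min (piP p / 2) (piP p - piP p / 2) = piP p / 2 := by
    rw [sub_half, min_self]
  have hmin : ContinuousAt (fun x => min x (piP p - x)) (piP p / 2) := by fun_prop
  have hmaps : MapsTo (fun x => min x (piP p - x)) univ (Iic (piP p / 2)) := fun x _ => by
    simp only [mem_Iic, min_le_iff]
    rcases le_total x (piP p / 2) with h | h
    · exact Or.inl h
    · exact Or.inr (by linarith)
  rw [funext sinP_eq_sinPHalf_min, ← continuousWithinAt_univ]
  refine ContinuousWithinAt.comp (g := sinPHalf p) ?_ hmin.continuousWithinAt hmaps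
  rw [hfold]
  exact continuousWithinAt_sinPHalf_half hp

lemma sinP_lt_sinP (hp : 1 < p) {a b : ℝ} (ha : 0 < a) (hab : a < b)
    (hsum : a + b < piP p) : sinP p a < sinP p b := by
  have haL : a < piP p / 2 := by linarith
  rcases le_or_gt b (piP p / 2) with hbL | hbL
  · rw [sinP_of_le haL.le, sinP_of_le hbL]
    exact sinPHalf_strictMonoOn hp ⟨ha.le, haL.le⟩ ⟨by linarith, hbL⟩ hab
  · rw [sinP_of_le haL.le, sinP_of_half_lt hbL]
    exact sinPHalf_strictMonoOn hp ⟨ha.le, haL.le⟩ ⟨by linarith, by linarith⟩ (by linarith)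

end SinP

section CotP

variable {p : ℝ}

lemma abs_rpow_sub_two_mul_self_of_pos {c : ℝ} (hc : 0 < c) :
    |c| ^ (p - 2) * c = c ^ (p - 1) := by
  rw [abs_of_pos hc, ← Real.rpow_add_one hc.ne', show p - 2 + 1 = p - 1 by ring]

lemma abs_abs_rpow_sub_two_mul_self (hp : 1 < p) (c : ℝ) :
    |(|c| ^ (p - 2) * c)| = |c| ^ (p - 1) := by
  rcases eq_or_ne c 0 with rfl | hc
  · simp [Real.zero_rpow (by linarith : p - 1 ≠ 0)]
  · rw [abs_mul, abs_of_nonneg (Real.rpow_nonneg (abs_nonneg c) _),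
      ← Real.rpow_add_one (abs_ne_zero.mpr hc), show p - 2 + 1 = p - 1 by ring]

lemma sinP_mem_Ioc (hp : 1 < p) {x : ℝ} (hx : x ∈ Ioo 0 (piP p)) : sinP p x ∈ Ioc 0 1 := by
  rcases lt_trichotomy x (piP p / 2) with h | rfl | h
  · exact Ioo_subset_Ioc_self (sinP_mem_Ioo_of_lt_half hp ⟨hx.1, h⟩)
  · rw [sinP_half hp]; exact ⟨zero_lt_one, le_rfl⟩
  · exact Ioo_subset_Ioc_self (sinP_mem_Ioo_of_half_lt hp ⟨h, hx.2⟩)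

lemma cosP_of_le {x : ℝ} (h : x ≤ piP p / 2) : cosP p x = (1 - sinP p x ^ p) ^ (1 / p) :=
  if_pos h

lemma cosP_of_half_lt {x : ℝ} (h : piP p / 2 < x) :
    cosP p x = -(1 - sinP p x ^ p) ^ (1 / p) :=
  if_neg h.not_ge

lemma abs_cotP (hp : 1 < p) {x : ℝ} (hx : x ∈ Ioo 0 (piP p)) :
    |cotP p x| = (1 - sinP p x ^ p) ^ (1 / p) / sinP p x := by
  have hs := sinP_mem_Ioc hp hx
  have hcos : |cosP p x| = (1 - sinP p x ^ p) ^ (1 / p) := by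
    have hnonneg : 0 ≤ (1 - sinP p x ^ p) ^ (1 / p) :=
      Real.rpow_nonneg (by linarith [Real.rpow_le_one hs.1.le hs.2 (by linarith : 0 ≤ p)]) _
    unfold cosP
    split_ifs
    · exact abs_of_nonneg hnonneg
    · rw [abs_neg, abs_of_nonneg hnonneg]
  rw [cotP, abs_div, hcos, abs_of_pos hs.1]

lemma cotP_pos (hp : 1 < p) {x : ℝ} (hx : x ∈ Ioo 0 (piP p / 2)) : 0 < cotP p x := by
  have hs := sinP_mem_Ioo_of_lt_half hp hx
  rw [cotP, cosP_of_le hx.2.le]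
  exact div_pos (Real.rpow_pos_of_pos (one_sub_rpow_pos (by linarith) hs.1.le hs.2) _) hs.1

lemma cotP_half (hp : 1 < p) : cotP p (piP p / 2) = 0 := by
  rw [cotP, cosP_of_le le_rfl, sinP_half hp, Real.one_rpow, sub_self,
    Real.zero_rpow (one_div_ne_zero (by linarith)), zero_div]

noncomputable def cotPPow (p x : ℝ) : ℝ := |cotP p x| ^ (p - 2) * cotP p x

lemma cotPPow_half (hp : 1 < p) : cotPPow p (piP p / 2) = 0 := by
  rw [cotPPow, cotP_half hp, mul_zero]

lemma continuousAt_cotPPow_half (hp : 1 < p) : ContinuousAt (cotPPow p) (piP p / 2) := by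
  have hπ := piP_pos hp
  have hnhds : Ioo 0 (piP p) ∈ 𝓝 (piP p / 2) := Ioo_mem_nhds (by linarith) (by linarith)
  have hsin := continuousAt_sinP_half hp
  have habs : Tendsto (fun x => |cotP p x|) (𝓝 (piP p / 2)) (𝓝 0) := by
    have hlim : ContinuousAt (fun x => (1 - sinP p x ^ p) ^ (1 / p) / sinP p x) (piP p / 2) :=
      ((continuousAt_const.sub (hsin.rpow_const (Or.inr (by linarith)))).rpow_const
        (Or.inr (by positivity))).div hsin (by rw [sinP_half hp]; exact one_ne_zero)
    have hval : (1 - sinP p (piP p / 2) ^ p) ^ (1 / p) / sinP p (piP p / 2) = 0 := by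
      rw [← abs_cotP hp (mem_of_mem_nhds hnhds), cotP_half hp, abs_zero]
    rw [← hval]
    exact hlim.tendsto.congr' (eventually_of_mem hnhds fun x hx => (abs_cotP hp hx).symm)
  have hpow : Tendsto (fun x => |cotP p x| ^ (p - 1)) (𝓝 (piP p / 2)) (𝓝 0) := by
    simpa [Real.zero_rpow (by linarith : p - 1 ≠ 0)] using
      habs.rpow_const (p := p - 1) (Or.inr (by linarith))
  rw [ContinuousAt, cotPPow_half hp, tendsto_zero_iff_abs_tendsto_zero]
  exact hpow.congr fun x => (abs_abs_rpow_sub_two_mul_self hp _).symm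

lemma div_rpow_sub_one_eq {s : ℝ} (hs0 : 0 < s) (hs1 : s ^ p ≤ 1) :
    ((1 - s ^ p) ^ (1 / p) / s) ^ (p - 1) = (1 - s ^ p) ^ ((p - 1) / p) * s ^ (-(p - 1)) := by
  have hb : 0 ≤ 1 - s ^ p := by linarith
  rw [Real.div_rpow (Real.rpow_nonneg hb _) hs0.le, ← Real.rpow_mul hb,
    show 1 / p * (p - 1) = (p - 1) / p by ring, Real.rpow_neg hs0.le, div_eq_mul_inv]

lemma cotPPow_of_lt_half (hp : 1 < p) {x : ℝ} (hx : x ∈ Ioo 0 (piP p / 2)) :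
    cotPPow p x = (1 - sinP p x ^ p) ^ ((p - 1) / p) * sinP p x ^ (-(p - 1)) := by
  have hs := sinP_mem_Ioo_of_lt_half hp hx
  rw [cotPPow, abs_rpow_sub_two_mul_self_of_pos (cotP_pos hp hx), cotP, cosP_of_le hx.2.le,
    div_rpow_sub_one_eq hs.1 (Real.rpow_le_one hs.1.le hs.2.le (by linarith))]

lemma cotPPow_of_half_lt (hp : 1 < p) {x : ℝ} (hx : x ∈ Ioo (piP p / 2) (piP p)) :
    cotPPow p x = -((1 - sinP p x ^ p) ^ ((p - 1) / p) * sinP p x ^ (-(p - 1))) := by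
  have hs := sinP_mem_Ioo_of_half_lt hp hx
  have hcot : cotP p x = -((1 - sinP p x ^ p) ^ (1 / p) / sinP p x) := by
    rw [cotP, cosP_of_half_lt hx.1, neg_div]
  have hpos : 0 < (1 - sinP p x ^ p) ^ (1 / p) / sinP p x :=
    div_pos (Real.rpow_pos_of_pos (one_sub_rpow_pos (by linarith) hs.1.le hs.2) _) hs.1
  rw [cotPPow, hcot, abs_neg, mul_neg, abs_rpow_sub_two_mul_self_of_pos hpos,
    div_rpow_sub_one_eq hs.1 (Real.rpow_le_one hs.1.le hs.2.le (by linarith))]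

end CotP

section Derivative

variable {p : ℝ}

/-- With `s = sin_p` and `ε = ±1` the sign of `cos_p`, this is
`(|cot_p|^(p-2) cot_p)' = -(p-1) / sin_p^p`. -/
lemma hasDerivAt_sign_mul_rpow_mul_rpow (hp : 1 < p) {s : ℝ → ℝ} {x ε : ℝ}
    (hε : ε = 1 ∨ ε = -1) (h0 : 0 < s x) (h1 : s x < 1)
    (hs : HasDerivAt s (ε * (1 - s x ^ p) ^ (1 / p)) x) :
    HasDerivAt (fun z => ε * ((1 - s z ^ p) ^ ((p - 1) / p) * s z ^ (-(p - 1))))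
      (-(p - 1) / s x ^ p) x := by
  have hb : 0 < 1 - s x ^ p := one_sub_rpow_pos (by linarith) h0.le h1
  have hnum : HasDerivAt (fun z => (1 - s z ^ p) ^ ((p - 1) / p))
      (-(ε * (1 - s x ^ p) ^ (1 / p) * p * s x ^ (p - 1)) * ((p - 1) / p) *
        (1 - s x ^ p) ^ ((p - 1) / p - 1)) x :=
    ((hasDerivAt_const x 1).sub (hs.rpow_const (Or.inl h0.ne'))).congr_deriv (zero_sub _)
      |>.rpow_const (Or.inl hb.ne')
  have hden : HasDerivAt (fun z => s z ^ (-(p - 1)))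
      (ε * (1 - s x ^ p) ^ (1 / p) * (-(p - 1)) * s x ^ (-(p - 1) - 1)) x :=
    hs.rpow_const (Or.inl h0.ne')
  refine ((hnum.mul hden).const_mul ε).congr_deriv ?_
  have ha : 0 < (1 - s x ^ p) ^ (1 / p) := Real.rpow_pos_of_pos hb _
  have hv : 0 < s x ^ (p - 1) := Real.rpow_pos_of_pos h0 _
  have hr : 0 < s x ^ p := Real.rpow_pos_of_pos h0 _
  have e1 : (1 - s x ^ p) ^ ((p - 1) / p - 1) = (1 - s x ^ p) ^ ((p - 1) / p) / (1 - s x ^ p) := by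
    rw [Real.rpow_sub hb, Real.rpow_one]
  have e2 : s x ^ (-(p - 1)) = (s x ^ (p - 1))⁻¹ := Real.rpow_neg h0.le _
  have e3 : s x ^ (-(p - 1) - 1) = (s x ^ p)⁻¹ := by
    rw [show -(p - 1) - 1 = -p by ring, Real.rpow_neg h0.le]
  have e4 : (1 - s x ^ p) ^ ((p - 1) / p) = (1 - s x ^ p) / (1 - s x ^ p) ^ (1 / p) := by
    rw [eq_div_iff ha.ne', ← Real.rpow_add hb, show (p - 1) / p + 1 / p = 1 by field_simp; ring,
      Real.rpow_one]
  rw [e1, e2, e3, e4]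
  rcases hε with rfl | rfl <;> field_simp <;> ring

lemma hasDerivAt_cotPPow (hp : 1 < p) {x : ℝ} (hx : x ∈ Ioo 0 (piP p)) (hne : x ≠ piP p / 2) :
    HasDerivAt (cotPPow p) (-(p - 1) / sinP p x ^ p) x := by
  rcases hne.lt_or_gt with hlt | hgt
  · have hx' : x ∈ Ioo 0 (piP p / 2) := ⟨hx.1, hlt⟩
    have hs := sinP_mem_Ioo_of_lt_half hp hx'
    refine (hasDerivAt_sign_mul_rpow_mul_rpow hp (Or.inl rfl) hs.1 hs.2
      (by simpa using hasDerivAt_sinP_of_lt_half hp hx')).congr_of_eventuallyEq ?_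
    filter_upwards [Ioo_mem_nhds hx'.1 hx'.2] with z hz
    rw [cotPPow_of_lt_half hp hz, one_mul]
  · have hx' : x ∈ Ioo (piP p / 2) (piP p) := ⟨hgt, hx.2⟩
    have hs := sinP_mem_Ioo_of_half_lt hp hx'
    refine (hasDerivAt_sign_mul_rpow_mul_rpow hp (Or.inr rfl) hs.1 hs.2
      (by simpa using hasDerivAt_sinP_of_half_lt hp hx')).congr_of_eventuallyEq ?_
    filter_upwards [Ioo_mem_nhds hx'.1 hx'.2] with z hz
    rw [cotPPow_of_half_lt hp hz, neg_one_mul]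

lemma continuousOn_cotPPow (hp : 1 < p) : ContinuousOn (cotPPow p) (Ioo 0 (piP p)) := by
  intro x hx
  refine ContinuousAt.continuousWithinAt ?_
  by_cases hx2 : x = piP p / 2
  · exact hx2 ▸ continuousAt_cotPPow_half hp
  · exact (hasDerivAt_cotPPow hp hx hx2).continuousAt

end Derivative

lemma strictAntiOn_of_hasDerivAt_neg_of_ne {f f' : ℝ → ℝ} {D : Set ℝ} {c : ℝ}
    (hD : Convex ℝ D) (hf : ContinuousOn f D)
    (hf' : ∀ x ∈ interior D, x ≠ c → HasDerivAt f (f' x) x)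
    (hneg : ∀ x ∈ interior D, x ≠ c → f' x < 0) : StrictAntiOn f D := by
  have hpiece : ∀ a ∈ D, ∀ b ∈ D, a < b → c ∉ Ioo a b → f b < f a := by
    intro a ha b hb hab hc
    have hsub : Icc a b ⊆ D := hD.ordConnected.out ha hb
    refine strictAntiOn_of_deriv_neg (convex_Icc a b) (hf.mono hsub) (fun x hx => ?_)
      (left_mem_Icc.2 hab.le) (right_mem_Icc.2 hab.le) hab
    have hxD : x ∈ interior D := interior_mono hsub hx
    have hxc : x ≠ c := fun h => hc (h ▸ by rwa [interior_Icc] at hx)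
    rw [(hf' x hxD hxc).deriv]
    exact hneg x hxD hxc
  intro x hx y hy hxy
  by_cases hc : c ∈ Ioo x y
  · have hcD : c ∈ D := hD.ordConnected.out hx hy (Ioo_subset_Icc_self hc)
    exact (hpiece c hcD y hy hc.2 fun h => lt_irrefl c h.1).trans
      (hpiece x hx c hcD hc.1 fun h => lt_irrefl c h.2)
  · exact hpiece x hx y hy hxy hc

lemma strictAntiOn_cotPPow_add {p K : ℝ} (hp : 1 < p) (hK0 : 0 < K) (hK1 : K < 1) :
    StrictAntiOn (fun y => cotPPow p (K * y) + cotPPow p (K * (piP p - y)))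
      (Ioc 0 (piP p / 2)) := by
  have hπ := piP_pos hp
  have hleft : MapsTo (fun y => K * y) (Ioc 0 (piP p / 2)) (Ioo 0 (piP p / 2)) := fun y hy =>
    ⟨mul_pos hK0 hy.1, by nlinarith [hy.1, hy.2]⟩
  have hright : MapsTo (fun y => K * (piP p - y)) (Ioc 0 (piP p / 2)) (Ioo 0 (piP p)) :=
    fun y hy => ⟨mul_pos hK0 (by linarith [hy.2]), by nlinarith [hy.1, hy.2]⟩
  have hleft' : MapsTo (fun y => K * y) (Ioc 0 (piP p / 2)) (Ioo 0 (piP p)) :=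
    hleft.mono_right (Ioo_subset_Ioo_right (by linarith))
  refine strictAntiOn_of_hasDerivAt_neg_of_ne (c := piP p - piP p / (2 * K))
    (f' := fun y => K * (p - 1) * (1 / sinP p (K * (piP p - y)) ^ p - 1 / sinP p (K * y) ^ p))
    (convex_Ioc _ _) ?_ (fun y hy hyc => ?_) (fun y hy _ => ?_)
  · exact ((continuousOn_cotPPow hp).comp (by fun_prop) hleft').add
      ((continuousOn_cotPPow hp).comp (by fun_prop) hright)
  · rw [interior_Ioc] at hy
    have hy' : y ∈ Ioc 0 (piP p / 2) := Ioo_subset_Ioc_self hy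
    -- `c` is the point where `K * (π_p - y) = π_p / 2`
    have hne : K * (piP p - y) ≠ piP p / 2 := fun h => hyc (by field_simp; linarith)
    have h1 := (hasDerivAt_cotPPow hp (hleft' hy') (hleft hy').2.ne).comp y
      ((hasDerivAt_id y).const_mul K)
    have h2 := (hasDerivAt_cotPPow hp (hright hy') hne).comp y
      (((hasDerivAt_id y).const_sub (piP p)).const_mul K)
    exact (h1.add h2).congr_deriv (by ring)
  · rw [interior_Ioc] at hy
    have hy' : y ∈ Ioc 0 (piP p / 2) := Ioo_subset_Ioc_self hy
    have hs0 : 0 < sinP p (K * y) := (sinP_mem_Ioo_of_lt_half hp (hleft hy')).1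
    have hsin : sinP p (K * y) < sinP p (K * (piP p - y)) :=
      sinP_lt_sinP hp (mul_pos hK0 hy.1) (by nlinarith [hy.2]) (by nlinarith)
    have hpow := one_div_lt_one_div_of_lt (Real.rpow_pos_of_pos hs0 p)
      (Real.rpow_lt_rpow hs0.le hsin (by linarith))
    exact mul_neg_of_pos_of_neg (mul_pos hK0 (by linarith)) (by linarith)

/-- For `K ∈ (0,1)` the function
`F(y) = K^(p-1)((cot_p (K y))^(p-1) + |cot_p (K(π_p - y))|^(p-2) cot_p (K(π_p - y)))`
on `(0, π_p/2]` attains its minimum exactly at `y = π_p/2`, where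
`F(π_p/2) = 2 K^(p-1) (cot_p (K π_p/2))^(p-1)`. -/
theorem F_min_at_half (p K : ℝ) (hp : 1 < p) (hK0 : 0 < K) (hK1 : K < 1)
    (F : ℝ → ℝ)
    (hF : ∀ y, F y = K ^ (p - 1) * ((cotP p (K * y)) ^ (p - 1) +
      |cotP p (K * (piP p - y))| ^ (p - 2) * cotP p (K * (piP p - y)))) :
    F (piP p / 2) = 2 * K ^ (p - 1) * (cotP p (K * piP p / 2)) ^ (p - 1) ∧
    ∀ y ∈ Set.Ioo 0 (piP p / 2), F y > F (piP p / 2) := by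
  have hπ := piP_pos hp
  have hKy : ∀ y ∈ Ioc 0 (piP p / 2), K * y ∈ Ioo 0 (piP p / 2) := fun y hy =>
    ⟨mul_pos hK0 hy.1, by nlinarith [hy.1, hy.2]⟩
  have hFS : ∀ y ∈ Ioc 0 (piP p / 2),
      F y = K ^ (p - 1) * (cotPPow p (K * y) + cotPPow p (K * (piP p - y))) := fun y hy => by
    rw [hF, cotPPow, cotPPow, abs_rpow_sub_two_mul_self_of_pos (cotP_pos hp (hKy y hy))]
  have hhalf : piP p / 2 ∈ Ioc 0 (piP p / 2) := ⟨by linarith, le_rfl⟩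
  refine ⟨?_, fun y hy => ?_⟩
  · rw [hF, sub_half, abs_rpow_sub_two_mul_self_of_pos (cotP_pos hp (hKy _ hhalf)), mul_div_assoc]
    ring
  · rw [hFS y (Ioo_subset_Ioc_self hy), hFS _ hhalf, gt_iff_lt]
    exact mul_lt_mul_of_pos_left (strictAntiOn_cotPPow_add hp hK0 hK1 (Ioo_subset_Ioc_self hy)
      hhalf hy.2) (Real.rpow_pos_of_pos hK0 _)
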